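/- Let f₁, f₂: ℤⁿ → ℝ be defined by fᵢ(σ) = Aᵢ·∏ⱼ B_{i,j}^{σⱼ} where B_{i,j} = (bᵢ−αⱼ)/(cᵢ−αⱼ), and set Z = (b₁−b₂)(c₁−c₂)/((b₁−c₂)(c₁−b₂)). Then τ(σ) = 1 + f₁(σ) + f₂(σ) + Z·f₁(σ)f₂(σ) satisfies the Hirota bilinear difference equation (αᵢ−αⱼ)τ(σ+eₖ)τ(σ+eᵢ+eⱼ) + (αⱼ−αₖ)τ(σ+eᵢ)τ(σ+eⱼ+eₖ) + (αₖ−αᵢ)τ(σ+eⱼ)τ(σ+eᵢ+eₖ) = 0 for all σ and distinct i,j,k. -/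

import Mathlib

/-!
Put `x, y, z = αᵢ, αⱼ, αₖ`, `F₁ = f₁ σ`, `F₂ = f₂ σ`, `pₘ = B₁ m`, `qₘ = B₂ m`. A shift by `eₘ`
multiplies `fᵢ` by `B_{i,m}`, so every value of `τ` in the equation is
`1 + F₁ P + F₂ Q + Z (F₁ P) (F₂ Q)` for monomials `P` in the `p`'s and `Q` in the `q`'s, and the
left-hand side is a polynomial in `F₁, F₂`. Its coefficients of `F₁` and `F₂` are one-soliton
identities for `p` and for `q`, those of `F₁²F₂` and `F₁F₂²` are multiples of these, and all
others but that of `F₁F₂` are multiples of `(x - y) + (y - z) + (z - x) = 0`. The coefficient of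
`F₁F₂` is the interaction identity, and it is this identity that fixes `Z`.
-/

theorem prod_zpow_add_single {ι G₀ : Type*} [Fintype ι] [DecidableEq ι] [CommGroupWithZero G₀]
    (B : ι → G₀) (σ : ι → ℤ) {m : ι} (hm : B m ≠ 0) :
    ∏ l, B l ^ (σ + Pi.single m 1 : ι → ℤ) l = (∏ l, B l ^ σ l) * B m := by
  calc ∏ l, B l ^ (σ + Pi.single m 1 : ι → ℤ) l
      = ∏ l, B l ^ σ l * (Pi.mulSingle m (B m) : ι → G₀) l := by
        refine Finset.prod_congr rfl fun l _ => ?_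
        rcases eq_or_ne l m with rfl | hl
        · simp [zpow_add_one₀ hm]
        · simp [hl]
    _ = (∏ l, B l ^ σ l) * B m := by
        rw [Finset.prod_mul_distrib, Fintype.prod_pi_mulSingle']

section Identities

variable {K : Type*} [Field K]

theorem one_soliton_identity {b c x y z p₁ p₂ p₃ : K} (hx : c ≠ x) (hy : c ≠ y) (hz : c ≠ z)
    (hp₁ : p₁ = (b - x) / (c - x)) (hp₂ : p₂ = (b - y) / (c - y))
    (hp₃ : p₃ = (b - z) / (c - z)) :
    (x - y) * (p₃ + p₁ * p₂) + (y - z) * (p₁ + p₂ * p₃) + (z - x) * (p₂ + p₁ * p₃) = 0 := by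
  subst hp₁ hp₂ hp₃
  rw [← sub_ne_zero] at hx hy hz
  field_simp
  ring

theorem two_soliton_interaction_identity {x y z b₁ b₂ c₁ c₂ p₁ p₂ p₃ q₁ q₂ q₃ Z : K}
    (hx₁ : c₁ ≠ x) (hy₁ : c₁ ≠ y) (hz₁ : c₁ ≠ z) (hx₂ : c₂ ≠ x) (hy₂ : c₂ ≠ y) (hz₂ : c₂ ≠ z)
    (hb₁c₂ : b₁ ≠ c₂) (hc₁b₂ : c₁ ≠ b₂)
    (hp₁ : p₁ = (b₁ - x) / (c₁ - x)) (hp₂ : p₂ = (b₁ - y) / (c₁ - y))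
    (hp₃ : p₃ = (b₁ - z) / (c₁ - z))
    (hq₁ : q₁ = (b₂ - x) / (c₂ - x)) (hq₂ : q₂ = (b₂ - y) / (c₂ - y))
    (hq₃ : q₃ = (b₂ - z) / (c₂ - z))
    (hZ : Z = (b₁ - b₂) * (c₁ - c₂) / ((b₁ - c₂) * (c₁ - b₂))) :
    (x - y) * (p₃ * q₁ * q₂ + q₃ * p₁ * p₂ + Z * (p₃ * q₃ + p₁ * p₂ * q₁ * q₂))
      + (y - z) * (p₁ * q₂ * q₃ + q₁ * p₂ * p₃ + Z * (p₁ * q₁ + p₂ * p₃ * q₂ * q₃))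
      + (z - x) * (p₂ * q₁ * q₃ + q₂ * p₁ * p₃ + Z * (p₂ * q₂ + p₁ * p₃ * q₁ * q₃)) = 0 := by
  subst hp₁ hp₂ hp₃ hq₁ hq₂ hq₃ hZ
  rw [← sub_ne_zero] at hx₁ hy₁ hz₁ hx₂ hy₂ hz₂ hb₁c₂ hc₁b₂
  field_simp
  ring

theorem two_soliton_three_point_identity {x y z b₁ b₂ c₁ c₂ p₁ p₂ p₃ q₁ q₂ q₃ Z F₁ F₂ : K}
    (hx₁ : c₁ ≠ x) (hy₁ : c₁ ≠ y) (hz₁ : c₁ ≠ z) (hx₂ : c₂ ≠ x) (hy₂ : c₂ ≠ y) (hz₂ : c₂ ≠ z)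
    (hb₁c₂ : b₁ ≠ c₂) (hc₁b₂ : c₁ ≠ b₂)
    (hp₁ : p₁ = (b₁ - x) / (c₁ - x)) (hp₂ : p₂ = (b₁ - y) / (c₁ - y))
    (hp₃ : p₃ = (b₁ - z) / (c₁ - z))
    (hq₁ : q₁ = (b₂ - x) / (c₂ - x)) (hq₂ : q₂ = (b₂ - y) / (c₂ - y))
    (hq₃ : q₃ = (b₂ - z) / (c₂ - z))
    (hZ : Z = (b₁ - b₂) * (c₁ - c₂) / ((b₁ - c₂) * (c₁ - b₂))) :
    (x - y) * (1 + F₁ * p₃ + F₂ * q₃ + Z * (F₁ * p₃) * (F₂ * q₃))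
        * (1 + F₁ * (p₁ * p₂) + F₂ * (q₁ * q₂) + Z * (F₁ * (p₁ * p₂)) * (F₂ * (q₁ * q₂)))
      + (y - z) * (1 + F₁ * p₁ + F₂ * q₁ + Z * (F₁ * p₁) * (F₂ * q₁))
        * (1 + F₁ * (p₂ * p₃) + F₂ * (q₂ * q₃) + Z * (F₁ * (p₂ * p₃)) * (F₂ * (q₂ * q₃)))
      + (z - x) * (1 + F₁ * p₂ + F₂ * q₂ + Z * (F₁ * p₂) * (F₂ * q₂))
        * (1 + F₁ * (p₁ * p₃) + F₂ * (q₁ * q₃) + Z * (F₁ * (p₁ * p₃)) * (F₂ * (q₁ * q₃)))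
      = 0 := by
  have hp := one_soliton_identity hx₁ hy₁ hz₁ hp₁ hp₂ hp₃
  have hq := one_soliton_identity hx₂ hy₂ hz₂ hq₁ hq₂ hq₃
  have hpq := two_soliton_interaction_identity hx₁ hy₁ hz₁ hx₂ hy₂ hz₂ hb₁c₂ hc₁b₂
    hp₁ hp₂ hp₃ hq₁ hq₂ hq₃ hZ
  linear_combination (F₁ + Z * q₁ * q₂ * q₃ * F₁ * F₂ ^ 2) * hp
    + (F₂ + Z * p₁ * p₂ * p₃ * F₁ ^ 2 * F₂) * hq + (F₁ * F₂) * hpq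

end Identities

theorem two_soliton_BHZ_general (n : ℕ) (α : Fin n → ℝ)
    (b₁ b₂ c₁ c₂ A₁ A₂ : ℝ)
    (hb₁ : ∀ j, b₁ ≠ α j) (hb₂ : ∀ j, b₂ ≠ α j)
    (hc₁ : ∀ j, c₁ ≠ α j) (hc₂ : ∀ j, c₂ ≠ α j)
    (hb₁c₂ : b₁ ≠ c₂) (hc₁b₂ : c₁ ≠ b₂)
    (B₁ B₂ : Fin n → ℝ)
    (hB₁ : ∀ j, B₁ j = (b₁ - α j) / (c₁ - α j))
    (hB₂ : ∀ j, B₂ j = (b₂ - α j) / (c₂ - α j))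
    (f₁ f₂ : (Fin n → ℤ) → ℝ)
    (hf₁ : ∀ σ, f₁ σ = A₁ * ∏ l, B₁ l ^ σ l)
    (hf₂ : ∀ σ, f₂ σ = A₂ * ∏ l, B₂ l ^ σ l)
    (Z : ℝ) (hZ : Z = (b₁ - b₂) * (c₁ - c₂) / ((b₁ - c₂) * (c₁ - b₂)))
    (τ : (Fin n → ℤ) → ℝ)
    (hτ : ∀ σ, τ σ = 1 + f₁ σ + f₂ σ + Z * f₁ σ * f₂ σ)
    (σ : Fin n → ℤ) (i j k : Fin n) :
    (α i - α j) * τ (σ + Pi.single k 1) * τ (σ + Pi.single i 1 + Pi.single j 1)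
      + (α j - α k) * τ (σ + Pi.single i 1) * τ (σ + Pi.single j 1 + Pi.single k 1)
      + (α k - α i) * τ (σ + Pi.single j 1) * τ (σ + Pi.single i 1 + Pi.single k 1) = 0 := by
  have hB₁_ne (l : Fin n) : B₁ l ≠ 0 := by
    rw [hB₁]; exact div_ne_zero (sub_ne_zero.2 (hb₁ l)) (sub_ne_zero.2 (hc₁ l))
  have hB₂_ne (l : Fin n) : B₂ l ≠ 0 := by
    rw [hB₂]; exact div_ne_zero (sub_ne_zero.2 (hb₂ l)) (sub_ne_zero.2 (hc₂ l))
  have shift₁ (σ : Fin n → ℤ) (m : Fin n) : f₁ (σ + Pi.single m 1) = f₁ σ * B₁ m := by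
    rw [hf₁, hf₁, prod_zpow_add_single _ _ (hB₁_ne m), mul_assoc]
  have shift₂ (σ : Fin n → ℤ) (m : Fin n) : f₂ (σ + Pi.single m 1) = f₂ σ * B₂ m := by
    rw [hf₂, hf₂, prod_zpow_add_single _ _ (hB₂_ne m), mul_assoc]
  simp only [hτ, shift₁, shift₂]
  linear_combination two_soliton_three_point_identity (F₁ := f₁ σ) (F₂ := f₂ σ)
    (hc₁ i) (hc₁ j) (hc₁ k) (hc₂ i) (hc₂ j) (hc₂ k) hb₁c₂ hc₁b₂
    (hB₁ i) (hB₁ j) (hB₁ k) (hB₂ i) (hB₂ j) (hB₂ k) hZ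

/-- The 2-soliton ansatz `τ = 1 + f₁ + f₂ + Z f₁ f₂` with
`fᵢ(σ) = Aᵢ ∏ⱼ B_{i,j}^{σⱼ}`, `B_{i,j} = (bᵢ-αⱼ)/(cᵢ-αⱼ)`, and
`Z = (b₁-b₂)(c₁-c₂)/((b₁-c₂)(c₁-b₂))` satisfies the Hirota bilinear
difference equation. -/
theorem two_soliton_BHZ (n : ℕ) (α : Fin n → ℝ) (hα : Function.Injective α)
    (b₁ b₂ c₁ c₂ A₁ A₂ : ℝ)
    (hb₁ : ∀ j, b₁ ≠ α j) (hb₂ : ∀ j, b₂ ≠ α j)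
    (hc₁ : ∀ j, c₁ ≠ α j) (hc₂ : ∀ j, c₂ ≠ α j)
    (hb₁c₂ : b₁ ≠ c₂) (hc₁b₂ : c₁ ≠ b₂)
    (B₁ B₂ : Fin n → ℝ)
    (hB₁ : ∀ j, B₁ j = (b₁ - α j) / (c₁ - α j))
    (hB₂ : ∀ j, B₂ j = (b₂ - α j) / (c₂ - α j))
    (f₁ f₂ : (Fin n → ℤ) → ℝ)
    (hf₁ : ∀ σ, f₁ σ = A₁ * ∏ l, B₁ l ^ σ l)
    (hf₂ : ∀ σ, f₂ σ = A₂ * ∏ l, B₂ l ^ σ l)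
    (Z : ℝ) (hZ : Z = (b₁ - b₂) * (c₁ - c₂) / ((b₁ - c₂) * (c₁ - b₂)))
    (τ : (Fin n → ℤ) → ℝ)
    (hτ : ∀ σ, τ σ = 1 + f₁ σ + f₂ σ + Z * f₁ σ * f₂ σ)
    (σ : Fin n → ℤ) (i j k : Fin n) (hij : i ≠ j) (hjk : j ≠ k) (hik : i ≠ k) :
    (α i - α j) * τ (σ + Pi.single k 1) * τ (σ + Pi.single i 1 + Pi.single j 1)
      + (α j - α k) * τ (σ + Pi.single i 1) * τ (σ + Pi.single j 1 + Pi.single k 1)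
      + (α k - α i) * τ (σ + Pi.single j 1) * τ (σ + Pi.single i 1 + Pi.single k 1) = 0 :=
  two_soliton_BHZ_general n α b₁ b₂ c₁ c₂ A₁ A₂ hb₁ hb₂ hc₁ hc₂ hb₁c₂ hc₁b₂ B₁ B₂ hB₁ hB₂ f₁ f₂ hf₁
    hf₂ Z hZ τ hτ σ i j k
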